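/- arXiv:1712.08228 — 15 statements merged into one kernel-verified Lean document; each statement's English description precedes it below -/
import Mathlib

section
/- Let E be a real normed vector space, let f : E → E, let V : E → ℝ be differentiable, and let γ ∈ ℝ. Suppose that for every y ∈ E with V(y) > γ, the derivative of V at y in the direction f(y) is strictly negative (i.e. fderiv V y (f y) < 0). Let x : ℝ → E be differentiable with x'(t) = f(x(t)) for all t. If V(x(0)) ≤ γ, then V(x(t)) ≤ γ for all t ≥ 0. In other words, the sublevel set {y : V(y) ≤ γ} is positively invariant for the flow of ẋ = f(x). -/
/-- Positive invariance of a sublevel set of a Lyapunov-like function: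
if `fderiv ℝ V y (f y) < 0` whenever `V y > γ`, then the sublevel set
`{y | V y ≤ γ}` is positively invariant for solutions of `ẋ = f x`. -/
theorem sublevel_positively_invariant
    {E : Type*} [NormedAddCommGroup E] [NormedSpace ℝ E]
    (f : E → E) (V : E → ℝ) (γ : ℝ)
    (hV : Differentiable ℝ V)
    (hdec : ∀ y : E, V y > γ → fderiv ℝ V y (f y) < 0)
    (x : ℝ → E) (hx : Differentiable ℝ x)
    (hode : ∀ t : ℝ, deriv x t = f (x t))
    (h0 : V (x 0) ≤ γ) :
    ∀ t : ℝ, 0 ≤ t → V (x t) ≤ γ := by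
  set g : ℝ → ℝ := fun t => V (x t) with hg
  have hgdiff : Differentiable ℝ g := hV.comp hx
  have hgderiv : ∀ u : ℝ, HasDerivAt g (fderiv ℝ V (x u) (f (x u))) u := by
    intro u
    have h1 := (hV (x u)).hasFDerivAt.comp_hasDerivAt u (hx u).hasDerivAt
    rwa [hode u] at h1
  intro t ht
  by_contra hgt
  push_neg at hgt
  set S : Set ℝ := {u | u ∈ Set.Icc 0 t ∧ g u ≤ γ} with hS
  have hSne : S.Nonempty := ⟨0, ⟨le_refl 0, ht⟩, h0⟩
  have hSbdd : BddAbove S := ⟨t, fun u hu => hu.1.2⟩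
  set s : ℝ := sSup S with hs
  have hsmem : s ∈ S := by
    have hclosed : IsClosed S := by
      have : S = Set.Icc 0 t ∩ g ⁻¹' (Set.Iic γ) := by
        ext u; simp [hS, Set.mem_preimage, and_comm]
      rw [this]
      exact isClosed_Icc.inter (isClosed_Iic.preimage hgdiff.continuous)
    exact hclosed.csSup_mem hSne hSbdd
  have hst : s < t := by
    rcases lt_or_eq_of_le hsmem.1.2 with h | h
    · exact h
    · exact absurd (h ▸ hsmem.2) (not_le.mpr hgt)
  have hgu : ∀ u ∈ Set.Ioc s t, γ < g u := by
    intro u hu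
    by_contra hle
    push_neg at hle
    have : u ∈ S := ⟨⟨hsmem.1.1.trans hu.1.le, hu.2⟩, hle⟩
    exact absurd (le_csSup hSbdd this) (not_le.mpr hu.1)
  have hanti : StrictAntiOn g (Set.Icc s t) := by
    apply strictAntiOn_of_deriv_neg (convex_Icc s t) hgdiff.continuous.continuousOn
    intro u hu
    rw [interior_Icc] at hu
    rw [(hgderiv u).deriv]
    exact hdec _ (hgu u ⟨hu.1, hu.2.le⟩)
  have := hanti ⟨le_refl s, hst.le⟩ ⟨hst.le, le_refl t⟩ hst
  exact absurd (this.trans_le hsmem.2) (not_lt.mpr hgt.le)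
end

section
/- Let s, r, b > 0 with s ≥ 1 and b ≥ 2, and set c = (s+r)·b / (2·√(b−1)). Then for all real x₁, x₂, x₃: if V₁(x) = x₁² + x₂² + (x₃−r−s)² > c², then V̇₁(x) = 2s·x₁·(x₂−x₁) + 2x₂·(r·x₁ − x₂ − x₁·x₃) + 2(x₃−r−s)·(x₁·x₂ − b·x₃) < 0. (First case of the bound of Li et al. for the Lorenz system: the sphere of radius c₁ = (s+r)b/(2√(b−1)) around (0,0,r+s) is an attracting bound.) -/
/-- First case of the bound of Li et al. for the Lorenz system: for `s ≥ 1`, `b ≥ 2`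
and `c = (s+r)·b / (2√(b−1))`, outside the sphere `V₁ ≤ c²` around `(0,0,r+s)`
the derivative `V̇₁` along trajectories is negative. -/
theorem lorenz_sphere_bound_case1
    (s r b : ℝ) (hs : 0 < s) (hr : 0 < r) (hb : 0 < b)
    (hs1 : 1 ≤ s) (hb2 : 2 ≤ b)
    (c : ℝ) (hc : c = (s + r) * b / (2 * Real.sqrt (b - 1))) :
    ∀ x₁ x₂ x₃ : ℝ,
      x₁ ^ 2 + x₂ ^ 2 + (x₃ - r - s) ^ 2 > c ^ 2 →
      2 * s * x₁ * (x₂ - x₁) + 2 * x₂ * (r * x₁ - x₂ - x₁ * x₃)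
        + 2 * (x₃ - r - s) * (x₁ * x₂ - b * x₃) < 0 := by
  intro x₁ x₂ x₃ h
  have hb1 : (0:ℝ) < b - 1 := by linarith
  have hsqpos : 0 < Real.sqrt (b - 1) := Real.sqrt_pos.mpr hb1
  have hsq : Real.sqrt (b - 1) ^ 2 = b - 1 := Real.sq_sqrt hb1.le
  have hc2 : c ^ 2 = (s + r) ^ 2 * b ^ 2 / (4 * (b - 1)) := by
    rw [hc, div_pow, mul_pow, mul_pow, hsq]
    ring
  rw [hc2] at h
  by_contra hcon
  push_neg at hcon
  have key : x₁ ^ 2 + x₂ ^ 2 + (x₃ - r - s) ^ 2 ≤ (s + r) ^ 2 * b ^ 2 / (4 * (b - 1)) := by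
    rw [le_div_iff₀ (by linarith : (0:ℝ) < 4 * (b - 1))]
    nlinarith [sq_nonneg ((b - 1) * x₃ - (b - 2) * (r + s) / 2), sq_nonneg x₁,
      mul_nonneg (sub_nonneg.mpr hs1) (sq_nonneg x₁),
      mul_nonneg hb1.le (sq_nonneg x₂)]
  linarith
end

section
/- Let s, r, b > 0 with 2s > b and b < 2, and set c = r + s. Then for all real x₁, x₂, x₃: if V₁(x) = x₁² + x₂² + (x₃−r−s)² > c², then V̇₁(x) = 2s·x₁·(x₂−x₁) + 2x₂·(r·x₁ − x₂ − x₁·x₃) + 2(x₃−r−s)·(x₁·x₂ − b·x₃) < 0. (Second case of the bound of Li et al. for the Lorenz system.) -/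
/-- Second case of the bound of Li et al. for the Lorenz system: for `2s > b`, `b < 2`
and `c = r + s`, outside the sphere `V₁ ≤ c²` around `(0,0,r+s)` the derivative
`V̇₁` along trajectories is negative. -/
theorem lorenz_sphere_bound_case2
    (s r b : ℝ) (hs : 0 < s) (hr : 0 < r) (hb : 0 < b)
    (hsb : 2 * s > b) (hb2 : b < 2)
    (c : ℝ) (hc : c = r + s) :
    ∀ x₁ x₂ x₃ : ℝ,
      x₁ ^ 2 + x₂ ^ 2 + (x₃ - r - s) ^ 2 > c ^ 2 →
      2 * s * x₁ * (x₂ - x₁) + 2 * x₂ * (r * x₁ - x₂ - x₁ * x₃)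
        + 2 * (x₃ - r - s) * (x₁ * x₂ - b * x₃) < 0 := by
  intro x₁ x₂ x₃ h
  subst hc
  nlinarith [mul_nonneg hb.le (sq_nonneg (x₃ - r - s + (r + s))),
    mul_nonneg (by linarith : (0:ℝ) ≤ 2 * s - b) (sq_nonneg x₁),
    mul_nonneg (by linarith : (0:ℝ) ≤ 2 - b) (sq_nonneg x₂),
    mul_lt_mul_of_pos_left h hb]
end

section
/- Let s, r, b > 0 with 2s ≤ b and s < 1, and set c = (s+r)·b / (2·√(s·(b−s))). Then for all real x₁, x₂, x₃: if V₁(x) = x₁² + x₂² + (x₃−r−s)² > c², then V̇₁(x) = 2s·x₁·(x₂−x₁) + 2x₂·(r·x₁ − x₂ − x₁·x₃) + 2(x₃−r−s)·(x₁·x₂ − b·x₃) < 0. (Third case of the bound of Li et al. for the Lorenz system.) -/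
/-- Third case of the bound of Li et al. for the Lorenz system: for `2s ≤ b`, `s < 1`
and `c = (s+r)·b / (2√(s(b−s)))`, outside the sphere `V₁ ≤ c²` around `(0,0,r+s)`
the derivative `V̇₁` along trajectories is negative. -/
theorem lorenz_sphere_bound_case3
    (s r b : ℝ) (hs : 0 < s) (hr : 0 < r) (hb : 0 < b)
    (hsb : 2 * s ≤ b) (hs1 : s < 1)
    (c : ℝ) (hc : c = (s + r) * b / (2 * Real.sqrt (s * (b - s)))) :
    ∀ x₁ x₂ x₃ : ℝ,
      x₁ ^ 2 + x₂ ^ 2 + (x₃ - r - s) ^ 2 > c ^ 2 →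
      2 * s * x₁ * (x₂ - x₁) + 2 * x₂ * (r * x₁ - x₂ - x₁ * x₃)
        + 2 * (x₃ - r - s) * (x₁ * x₂ - b * x₃) < 0 := by
  intro x₁ x₂ x₃ h
  have hbs : 0 < b - s := by linarith
  have hpos : 0 < s * (b - s) := mul_pos hs hbs
  have hq : Real.sqrt (s * (b - s)) ^ 2 = s * (b - s) :=
    Real.sq_sqrt (le_of_lt hpos)
  have hqpos : 0 < Real.sqrt (s * (b - s)) := Real.sqrt_pos.mpr hpos
  have hc2 : c ^ 2 = (s + r) ^ 2 * b ^ 2 / (4 * (s * (b - s))) := by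
    rw [hc, div_pow, mul_pow, mul_pow, hq]; ring_nf
  have hV : 4 * (s * (b - s)) * (x₁ ^ 2 + x₂ ^ 2 + (x₃ - r - s) ^ 2)
      > (s + r) ^ 2 * b ^ 2 := by
    rw [hc2] at h
    have := (div_lt_iff₀ (by linarith : (0:ℝ) < 4 * (s * (b - s)))).mp h
    linarith
  nlinarith [sq_nonneg (2 * (b - s) * (x₃ - (r + s) / 2) + (r + s) * s),
    mul_nonneg (mul_nonneg (by linarith : (0:ℝ) ≤ 4 * (b - s)) (by linarith : (0:ℝ) ≤ 1 - s)) (sq_nonneg x₂)]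
end

section
/- Consider the classical Lorenz system with parameters s = 10, r = 28, b = 8/3, i.e. ẋ₁ = 10(x₂−x₁), ẋ₂ = 28x₁ − x₂ − x₁x₃, ẋ₃ = x₁x₂ − (8/3)x₃. Let x : ℝ → ℝ³ be a differentiable solution of this system. If x₁(0)² + x₂(0)² + (x₃(0)−38)² ≤ (152/√15)² = 23104/15, then x₁(t)² + x₂(t)² + (x₃(t)−38)² ≤ 23104/15 for all t ≥ 0; that is, the closed ball of radius 152/√15 around (0, 0, 38) is positively invariant. -/
/-!
Along a solution, `V = x₁² + x₂² + (x₃ - 38)² - 23104/15` satisfies the exact identity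
`V' = -2 V - 18 x₁² - (10/3) (x₃ - 38/5)²`, in which the cubic terms of the Lorenz field cancel
and the radius `152/√15` is precisely the one that makes the constant terms vanish.
Hence `V' ≤ -2 V`, and Grönwall's inequality turns `V 0 ≤ 0` into `V t ≤ V 0 · e^{-2t} ≤ 0`.
-/

open Set Topology

theorem nonpos_of_hasDerivAt_le_mul_self {f f' : ℝ → ℝ} {K a : ℝ}
    (hf : ∀ t ≥ a, HasDerivAt f (f' t) t) (bound : ∀ t ≥ a, f' t ≤ K * f t) (ha : f a ≤ 0)
    {t : ℝ} (ht : a ≤ t) : f t ≤ 0 := by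
  have hcont : ContinuousOn f (Icc a t) := fun s hs => (hf s hs.1).continuousAt.continuousWithinAt
  have hslope : ∀ s ∈ Ico a t, ∀ r, f' s < r → ∃ᶠ z in 𝓝[>] s,
      (z - s)⁻¹ * (f z - f s) < r := fun s hs _ hr =>
    (hf s hs.1).hasDerivWithinAt.liminf_right_slope_le hr
  calc f t ≤ gronwallBound (f a) K 0 (t - a) :=
        le_gronwallBound_of_liminf_deriv_right_le hcont hslope le_rfl
          (fun s hs => by simpa using bound s hs.1) t ⟨ht, le_rfl⟩
    _ = f a * Real.exp (K * (t - a)) := gronwallBound_ε0 _ _ _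
    _ ≤ 0 := mul_nonpos_of_nonpos_of_nonneg ha (Real.exp_pos _).le

noncomputable def lorenzBallExcess (a b c : ℝ) : ℝ :=
  a ^ 2 + b ^ 2 + (c - 38) ^ 2 - 23104 / 15

theorem hasDerivAt_lorenzBallExcess {x₁ x₂ x₃ : ℝ → ℝ} {t : ℝ}
    (d₁ : HasDerivAt x₁ (10 * (x₂ t - x₁ t)) t)
    (d₂ : HasDerivAt x₂ (28 * x₁ t - x₂ t - x₁ t * x₃ t) t)
    (d₃ : HasDerivAt x₃ (x₁ t * x₂ t - (8 / 3) * x₃ t) t) :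
    HasDerivAt (fun s => lorenzBallExcess (x₁ s) (x₂ s) (x₃ s))
      (-2 * lorenzBallExcess (x₁ t) (x₂ t) (x₃ t) - 18 * x₁ t ^ 2
        - 10 / 3 * (x₃ t - 38 / 5) ^ 2) t := by
  have := (((d₁.pow 2).add (d₂.pow 2)).add ((d₃.sub_const 38).pow 2)).sub_const (23104 / 15)
  exact this.congr_deriv (by simp only [lorenzBallExcess]; push_cast; ring)

/-- For the classical Lorenz system (`s = 10`, `r = 28`, `b = 8/3`), the closed ball of
radius `152/√15` around `(0, 0, 38)` is positively invariant. -/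
theorem lorenz_classical_ball_invariant
    (x₁ x₂ x₃ : ℝ → ℝ)
    (h₁ : Differentiable ℝ x₁) (h₂ : Differentiable ℝ x₂) (h₃ : Differentiable ℝ x₃)
    (ode₁ : ∀ t : ℝ, deriv x₁ t = 10 * (x₂ t - x₁ t))
    (ode₂ : ∀ t : ℝ, deriv x₂ t = 28 * x₁ t - x₂ t - x₁ t * x₃ t)
    (ode₃ : ∀ t : ℝ, deriv x₃ t = x₁ t * x₂ t - (8 / 3) * x₃ t)
    (h0 : x₁ 0 ^ 2 + x₂ 0 ^ 2 + (x₃ 0 - 38) ^ 2 ≤ 23104 / 15) :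
    ∀ t : ℝ, 0 ≤ t → x₁ t ^ 2 + x₂ t ^ 2 + (x₃ t - 38) ^ 2 ≤ 23104 / 15 := by
  have hV := fun t => hasDerivAt_lorenzBallExcess ((h₁ t).hasDerivAt.congr_deriv (ode₁ t))
    ((h₂ t).hasDerivAt.congr_deriv (ode₂ t)) ((h₃ t).hasDerivAt.congr_deriv (ode₃ t))
  intro t ht
  have := nonpos_of_hasDerivAt_le_mul_self (K := -2) (fun s _ => hV s)
    (fun s _ => by linarith [sq_nonneg (x₁ s), sq_nonneg (x₃ s - 38 / 5)])
    (by simp only [lorenzBallExcess]; linarith) ht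
  simp only [lorenzBallExcess] at this
  linarith
end

section
/- Consider the classical Lorenz system with parameters s = 10, r = 28, b = 8/3. For every differentiable global solution x : ℝ → ℝ³ of this system, limsup_{t→∞} ( x₁(t)² + x₂(t)² + (x₃(t)−38)² ) ≤ 23104/15 = (152/√15)². That is, every trajectory is ultimately contained in (any neighborhood of) the ball of radius 152/√15 around (0,0,38). -/
/-- For the classical Lorenz system (`s = 10`, `r = 28`, `b = 8/3`), every global
differentiable solution satisfies
`limsup_{t→∞} (x₁(t)² + x₂(t)² + (x₃(t)−38)²) ≤ 23104/15 = (152/√15)²`. -/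
theorem lorenz_classical_ultimate_bound
    (x₁ x₂ x₃ : ℝ → ℝ)
    (h₁ : Differentiable ℝ x₁) (h₂ : Differentiable ℝ x₂) (h₃ : Differentiable ℝ x₃)
    (ode₁ : ∀ t : ℝ, deriv x₁ t = 10 * (x₂ t - x₁ t))
    (ode₂ : ∀ t : ℝ, deriv x₂ t = 28 * x₁ t - x₂ t - x₁ t * x₃ t)
    (ode₃ : ∀ t : ℝ, deriv x₃ t = x₁ t * x₂ t - (8 / 3) * x₃ t) :
    Filter.limsup (fun t => x₁ t ^ 2 + x₂ t ^ 2 + (x₃ t - 38) ^ 2) Filter.atTop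
      ≤ 23104 / 15 := by
  set M : ℝ := 23104 / 15 with hM
  set V : ℝ → ℝ := fun t => x₁ t ^ 2 + x₂ t ^ 2 + (x₃ t - 38) ^ 2 with hV
  set W : ℝ → ℝ := fun t => Real.exp (2 * t) * (V t - M) with hW
  -- derivative of W
  have hWd : ∀ t : ℝ, HasDerivAt W
      (Real.exp (2 * t) * 2 * (V t - M) +
        Real.exp (2 * t) *
          (2 * x₁ t ^ 1 * deriv x₁ t + 2 * x₂ t ^ 1 * deriv x₂ t +
            2 * (x₃ t - 38) ^ 1 * deriv x₃ t)) t := by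
    intro t
    have hx1 : HasDerivAt x₁ (deriv x₁ t) t := (h₁ t).hasDerivAt
    have hx2 : HasDerivAt x₂ (deriv x₂ t) t := (h₂ t).hasDerivAt
    have hx3 : HasDerivAt x₃ (deriv x₃ t) t := (h₃ t).hasDerivAt
    have hVd : HasDerivAt V
        (2 * x₁ t ^ 1 * deriv x₁ t + 2 * x₂ t ^ 1 * deriv x₂ t +
          2 * (x₃ t - 38) ^ 1 * deriv x₃ t) t :=
      ((hx1.pow 2).add (hx2.pow 2)).add ((hx3.sub_const 38).pow 2)
    have he : HasDerivAt (fun t : ℝ => Real.exp (2 * t)) (Real.exp (2 * t) * 2) t := by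
      simpa using ((hasDerivAt_id t).const_mul 2).exp
    exact he.mul (hVd.sub_const M)
  have hWd' : ∀ t : ℝ, deriv W t ≤ 0 := by
    intro t
    rw [(hWd t).deriv]
    have he : 0 < Real.exp (2 * t) := Real.exp_pos _
    rw [ode₁ t, ode₂ t, ode₃ t]
    have key : 2 * (V t - M) +
        (2 * x₁ t ^ 1 * (10 * (x₂ t - x₁ t)) +
          2 * x₂ t ^ 1 * (28 * x₁ t - x₂ t - x₁ t * x₃ t) +
          2 * (x₃ t - 38) ^ 1 * (x₁ t * x₂ t - (8 / 3) * x₃ t)) ≤ 0 := by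
      simp only [pow_one, hV, hM]
      nlinarith [sq_nonneg (x₁ t), sq_nonneg (x₃ t - 38 / 5)]
    calc Real.exp (2 * t) * 2 * (V t - M) +
          Real.exp (2 * t) *
            (2 * x₁ t ^ 1 * (10 * (x₂ t - x₁ t)) +
              2 * x₂ t ^ 1 * (28 * x₁ t - x₂ t - x₁ t * x₃ t) +
              2 * (x₃ t - 38) ^ 1 * (x₁ t * x₂ t - (8 / 3) * x₃ t))
        = Real.exp (2 * t) * (2 * (V t - M) +
            (2 * x₁ t ^ 1 * (10 * (x₂ t - x₁ t)) +
              2 * x₂ t ^ 1 * (28 * x₁ t - x₂ t - x₁ t * x₃ t) +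
              2 * (x₃ t - 38) ^ 1 * (x₁ t * x₂ t - (8 / 3) * x₃ t))) := by ring
      _ ≤ 0 := mul_nonpos_of_nonneg_of_nonpos he.le key
  have hWanti : Antitone W :=
    antitone_of_deriv_nonpos (fun t => (hWd t).differentiableAt) hWd'
  -- V t ≤ M + (V 0 - M) * exp (-2 t) for t ≥ 0
  have hbound : ∀ᶠ t in Filter.atTop, V t ≤ M + (V 0 - M) * Real.exp (-(2 * t)) := by
    filter_upwards [Filter.eventually_ge_atTop (0 : ℝ)] with t ht
    have h := hWanti ht
    have h' : Real.exp (2 * t) * (V t - M) ≤ V 0 - M := by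
      simpa [hW, Real.exp_zero] using h
    have e1 : Real.exp (2 * t) * Real.exp (-(2 * t)) = 1 := by
      rw [← Real.exp_add]; simp
    have h2 : V t - M ≤ (V 0 - M) * Real.exp (-(2 * t)) := by
      calc V t - M = Real.exp (2 * t) * (V t - M) * Real.exp (-(2 * t)) := by
            rw [mul_comm (Real.exp (2 * t)) (V t - M), mul_assoc, e1, mul_one]
        _ ≤ (V 0 - M) * Real.exp (-(2 * t)) :=
            mul_le_mul_of_nonneg_right h' (Real.exp_pos (-(2 * t))).le
    linarith
  have hexp : Filter.Tendsto (fun t : ℝ => Real.exp (-(2 * t))) Filter.atTop (nhds 0) := by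
    apply Real.tendsto_exp_atBot.comp
    exact Filter.tendsto_neg_atTop_atBot.comp
      (Filter.Tendsto.const_mul_atTop (by norm_num : (0:ℝ) < 2) Filter.tendsto_id)
  have hg : Filter.Tendsto (fun t : ℝ => M + (V 0 - M) * Real.exp (-(2 * t)))
      Filter.atTop (nhds M) := by
    have := Filter.Tendsto.const_add M ((hexp.const_mul (V 0 - M)))
    simpa using this
  have hco : Filter.IsCoboundedUnder (· ≤ ·) Filter.atTop V :=
    Filter.isCoboundedUnder_le_of_le Filter.atTop (x := 0) (fun t => by positivity)
  calc Filter.limsup V Filter.atTop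
      ≤ Filter.limsup (fun t : ℝ => M + (V 0 - M) * Real.exp (-(2 * t))) Filter.atTop :=
        Filter.limsup_le_limsup hbound hco hg.isBoundedUnder_le
    _ = M := hg.limsup_eq
end

section
/- Let s, r, b > 0 with s ≥ 1 and b ≥ 2, and set c = b·r·√(s/(b−1)). Then for all real x₁, x₂, x₃: if V₃(x) = r·x₁² + s·x₂² + s·(x₃−2r)² > c², then V̇₃(x) = 2r·x₁·s·(x₂−x₁) + 2s·x₂·(r·x₁ − x₂ − x₁·x₃) + 2s·(x₃−2r)·(x₁·x₂ − b·x₃) < 0. (First case of Sparrow's elliptical bound for the Lorenz system.) -/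
/-!
Along trajectories `V̇₃ = -2s (r x₁² + x₂² + b (x₃ - r)² - b r²)`, so `V̇₃ ≥ 0` only on the
ellipsoid `E : r x₁² + x₂² + b (x₃ - r)² ≤ b r²`. On `E` the sum-of-squares identity
`s b² r² - (b-1) V₃ = s (b-1) (b r² - Q) + s ((b-1) x₃ - (b-2) r)² + (s-1)(b-1) r x₁²`,
with `Q` the left-hand side of `E`, gives `(b-1) V₃ ≤ s b² r² = (b-1) c²`.
-/

theorem lorenz_V₃_deriv_eq (s r b x₁ x₂ x₃ : ℝ) :
    2 * r * x₁ * s * (x₂ - x₁) + 2 * s * x₂ * (r * x₁ - x₂ - x₁ * x₃)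
        + 2 * s * (x₃ - 2 * r) * (x₁ * x₂ - b * x₃)
      = -2 * s * (r * x₁ ^ 2 + x₂ ^ 2 + b * (x₃ - r) ^ 2 - b * r ^ 2) := by
  ring

theorem lorenz_V₃_sos_identity (s r b x₁ x₂ x₃ : ℝ) :
    s * b ^ 2 * r ^ 2 - (b - 1) * (r * x₁ ^ 2 + s * x₂ ^ 2 + s * (x₃ - 2 * r) ^ 2)
      = s * (b - 1) * (b * r ^ 2 - (r * x₁ ^ 2 + x₂ ^ 2 + b * (x₃ - r) ^ 2))
        + s * ((b - 1) * x₃ - (b - 2) * r) ^ 2 + (s - 1) * (b - 1) * r * x₁ ^ 2 := by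
  ring

theorem lorenz_V₃_mul_le_of_mem_ellipsoid {s r b x₁ x₂ x₃ : ℝ} (hr : 0 ≤ r) (hs : 1 ≤ s)
    (hb : 1 ≤ b) (hE : r * x₁ ^ 2 + x₂ ^ 2 + b * (x₃ - r) ^ 2 ≤ b * r ^ 2) :
    (b - 1) * (r * x₁ ^ 2 + s * x₂ ^ 2 + s * (x₃ - 2 * r) ^ 2) ≤ s * b ^ 2 * r ^ 2 := by
  have hs0 : 0 ≤ s := zero_le_one.trans hs
  have hb1 : 0 ≤ b - 1 := sub_nonneg.2 hb
  linarith [lorenz_V₃_sos_identity s r b x₁ x₂ x₃,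
    mul_nonneg (mul_nonneg hs0 hb1) (sub_nonneg.2 hE),
    mul_nonneg hs0 (sq_nonneg ((b - 1) * x₃ - (b - 2) * r)),
    mul_nonneg (mul_nonneg (mul_nonneg (sub_nonneg.2 hs) hb1) hr) (sq_nonneg x₁)]

theorem sq_mul_sqrt_div_sub_one {s r b : ℝ} (hs : 0 ≤ s) (hb : 1 < b) :
    (b * r * Real.sqrt (s / (b - 1))) ^ 2 = s * b ^ 2 * r ^ 2 / (b - 1) := by
  have hb' : b - 1 ≠ 0 := (sub_pos.2 hb).ne'
  rw [mul_pow, Real.sq_sqrt (div_nonneg hs (sub_pos.2 hb).le)]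
  field_simp

theorem lorenz_ellipse_bound_case1_general
    (s r b : ℝ) (hr : 0 < r)
    (hs1 : 1 ≤ s) (hb2 : 2 ≤ b)
    (c : ℝ) (hc : c = b * r * Real.sqrt (s / (b - 1))) :
    ∀ x₁ x₂ x₃ : ℝ,
      r * x₁ ^ 2 + s * x₂ ^ 2 + s * (x₃ - 2 * r) ^ 2 > c ^ 2 →
      2 * r * x₁ * s * (x₂ - x₁) + 2 * s * x₂ * (r * x₁ - x₂ - x₁ * x₃)
        + 2 * s * (x₃ - 2 * r) * (x₁ * x₂ - b * x₃) < 0 := by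
  intro x₁ x₂ x₃ hV
  have hb1 : 0 < b - 1 := by linarith
  rw [lorenz_V₃_deriv_eq, neg_mul, neg_mul, neg_lt_zero]
  refine mul_pos (by linarith) (sub_pos.2 (lt_of_not_ge fun hE => hV.not_ge ?_))
  rw [hc, sq_mul_sqrt_div_sub_one (by linarith) (by linarith), le_div_iff₀ hb1, mul_comm]
  exact lorenz_V₃_mul_le_of_mem_ellipsoid hr.le hs1 (by linarith) hE

/-- First case of Sparrow's elliptical bound for the Lorenz system: for `s ≥ 1`,
`b ≥ 2` and `c = b·r·√(s/(b−1))`, outside the ellipsoid `V₃ ≤ c²` the derivative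
`V̇₃` along trajectories is negative. -/
theorem lorenz_ellipse_bound_case1
    (s r b : ℝ) (hs : 0 < s) (hr : 0 < r) (hb : 0 < b)
    (hs1 : 1 ≤ s) (hb2 : 2 ≤ b)
    (c : ℝ) (hc : c = b * r * Real.sqrt (s / (b - 1))) :
    ∀ x₁ x₂ x₃ : ℝ,
      r * x₁ ^ 2 + s * x₂ ^ 2 + s * (x₃ - 2 * r) ^ 2 > c ^ 2 →
      2 * r * x₁ * s * (x₂ - x₁) + 2 * s * x₂ * (r * x₁ - x₂ - x₁ * x₃)
        + 2 * s * (x₃ - 2 * r) * (x₁ * x₂ - b * x₃) < 0 :=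
  lorenz_ellipse_bound_case1_general s r b hr hs1 hb2 c hc
end

section
/- Let s, r, b > 0 with 2s > b and b < 2, and set c = 2r·√s. Then for all real x₁, x₂, x₃: if V₃(x) = r·x₁² + s·x₂² + s·(x₃−2r)² > c², then V̇₃(x) = 2r·x₁·s·(x₂−x₁) + 2s·x₂·(r·x₁ − x₂ − x₁·x₃) + 2s·(x₃−2r)·(x₁·x₂ − b·x₃) < 0. (Second case of Sparrow's elliptical bound for the Lorenz system.) -/
/-- Second case of Sparrow's elliptical bound for the Lorenz system: for `2s > b`,
`b < 2` and `c = 2r√s`, outside the ellipsoid `V₃ ≤ c²` the derivative `V̇₃`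
along trajectories is negative. -/
theorem lorenz_ellipse_bound_case2
    (s r b : ℝ) (hs : 0 < s) (hr : 0 < r) (hb : 0 < b)
    (hsb : 2 * s > b) (hb2 : b < 2)
    (c : ℝ) (hc : c = 2 * r * Real.sqrt s) :
    ∀ x₁ x₂ x₃ : ℝ,
      r * x₁ ^ 2 + s * x₂ ^ 2 + s * (x₃ - 2 * r) ^ 2 > c ^ 2 →
      2 * r * x₁ * s * (x₂ - x₁) + 2 * s * x₂ * (r * x₁ - x₂ - x₁ * x₃)
        + 2 * s * (x₃ - 2 * r) * (x₁ * x₂ - b * x₃) < 0 := by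
  intro x₁ x₂ x₃ hV
  have hsq : Real.sqrt s ^ 2 = s := Real.sq_sqrt hs.le
  have hc2 : c ^ 2 = 4 * r ^ 2 * s := by rw [hc, mul_pow, mul_pow, hsq]; ring
  rw [hc2] at hV
  nlinarith [mul_pos hb (sub_pos.2 hV), mul_nonneg (mul_nonneg (sub_nonneg.2 hsb.le) hr.le) (sq_nonneg x₁),
    mul_nonneg (mul_nonneg hs.le (sub_nonneg.2 hb2.le)) (sq_nonneg x₂),
    mul_nonneg (mul_nonneg hb.le hs.le) (sq_nonneg x₃)]
end

section
/- Let s, r, b > 0 with 2s ≤ b and s < 1, and set c = b·r/√(b−s). Then for all real x₁, x₂, x₃: if V₃(x) = r·x₁² + s·x₂² + s·(x₃−2r)² > c², then V̇₃(x) = 2r·x₁·s·(x₂−x₁) + 2s·x₂·(r·x₁ − x₂ − x₁·x₃) + 2s·(x₃−2r)·(x₁·x₂ − b·x₃) < 0. (Third case of Sparrow's elliptical bound for the Lorenz system.) -/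
/-- Third case of Sparrow's elliptical bound for the Lorenz system: for `2s ≤ b`,
`s < 1` and `c = b·r/√(b−s)`, outside the ellipsoid `V₃ ≤ c²` the derivative `V̇₃`
along trajectories is negative. -/
theorem lorenz_ellipse_bound_case3
    (s r b : ℝ) (hs : 0 < s) (hr : 0 < r) (hb : 0 < b)
    (hsb : 2 * s ≤ b) (hs1 : s < 1)
    (c : ℝ) (hc : c = b * r / Real.sqrt (b - s)) :
    ∀ x₁ x₂ x₃ : ℝ,
      r * x₁ ^ 2 + s * x₂ ^ 2 + s * (x₃ - 2 * r) ^ 2 > c ^ 2 →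
      2 * r * x₁ * s * (x₂ - x₁) + 2 * s * x₂ * (r * x₁ - x₂ - x₁ * x₃)
        + 2 * s * (x₃ - 2 * r) * (x₁ * x₂ - b * x₃) < 0 := by
  have ht : (0:ℝ) < b - s := by linarith
  have hsq : Real.sqrt (b - s) ^ 2 = b - s := Real.sq_sqrt ht.le
  have hsp : 0 < Real.sqrt (b - s) := Real.sqrt_pos.mpr ht
  intro x₁ x₂ x₃ hV
  have hc2 : c ^ 2 = b ^ 2 * r ^ 2 / (b - s) := by
    rw [hc, div_pow, hsq]; ring
  rw [hc2, gt_iff_lt, div_lt_iff₀ ht] at hV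
  -- key: W := r x₁² + x₂² + b(x₃-r)² > b r²
  have hW : r * x₁ ^ 2 + x₂ ^ 2 + b * (x₃ - r) ^ 2 > b * r ^ 2 := by
    nlinarith [sq_nonneg ((b - s) * x₃ - r * (b - 2 * s)),
      mul_nonneg (mul_nonneg ht.le (by linarith : (0:ℝ) ≤ 1 - s)) (sq_nonneg x₂)]
  nlinarith [mul_pos hs (sub_pos.mpr hW)]
end

section
/- Fix the Lorenz parameters s = 10, r = 28, b = 8/3, and let x₃₀ ∈ ℝ and c > 0. Define a₀ = 4096·x₃₀⁴, a₁ = 384·x₃₀²·(3x₃₀² − 228x₃₀ + 4762), a₂ = 9·(x₃₀² − 76x₃₀ + 1404)·(9x₃₀² − 684x₃₀ + 13436). Then the condition '(there exists α > 0 such that for all real x₁, x₂, x₃: V̇₂(x) ≤ −α·(V₂(x) − c²))' holds if and only if x₃₀² − 76x₃₀ + 1404 < 0 and there exists c₄ which is the greatest real solution of a₂·y⁴ + a₁·y² + a₀ = 0 with c ≥ c₄. -/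
/-!
Along trajectories, `−α (V₂ − c²) − V̇₂` splits into a binary quadratic form in `(x₁, x₂)` plus
a quadratic polynomial in `u = x₃ − x₃₀`. The form is homogeneous, so the decay condition with rate
`α` holds exactly when the form is positive semidefinite and the polynomial in `u` is nonnegative.
Discriminants turn these into `α ≤ A` and `64 x₃₀² ≤ c² α (48 − 9α)`, where
`A = 11 − √((x₃₀ − 38)² + 81) ≤ 2` is the smaller root of `α² − 22α = x₃₀² − 76 x₃₀ + 1404`.
As `α (48 − 9α)` increases on `[0, 2]`, the best rate is `α = A`, which is positive iff
`x₃₀² − 76 x₃₀ + 1404 < 0`. Using that relation for `A`, the biquadratic factors as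
`(64 x₃₀² − A (48 − 9A) y²) ((9A² − 348A + 3300) y² + 64 x₃₀²)`, whose greatest real root is
`√(64 x₃₀² / (A (48 − 9A)))`.
-/

section Quadratic

variable {K : Type*} [Field K] [LinearOrder K] [IsStrictOrderedRing K] {a b c : K}

theorem nonneg_of_forall_mul_sq_add_nonneg (h : ∀ t : K, 0 ≤ a * t ^ 2 + c) : 0 ≤ a := by
  by_contra! ha
  -- at `t = c / -a + 1 ≥ 1` we get `a t² ≤ a t = a - c < -c`
  have hc := h 0
  have ht := h (c / -a + 1)
  have hca : -a * (c / -a) = c := mul_div_cancel₀ c (neg_ne_zero.2 ha.ne)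
  have hq : 0 ≤ c / -a := div_nonneg (by simpa using hc) (by linarith)
  nlinarith

theorem quadratic_nonneg_iff_discrim_nonpos (ha : 0 < a) :
    (∀ x : K, 0 ≤ a * (x * x) + b * x + c) ↔ discrim a b c ≤ 0 := by
  refine ⟨discrim_le_zero, fun hd x => ?_⟩
  have key : 4 * a * (a * (x * x) + b * x + c) = (2 * a * x + b) ^ 2 - discrim a b c := by
    rw [discrim]; ring
  refine (mul_nonneg_iff_of_pos_left (by positivity : 0 < 4 * a)).1 ?_
  rw [key]
  nlinarith [sq_nonneg (2 * a * x + b)]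

theorem binary_quadratic_nonneg_iff :
    (∀ x y : K, 0 ≤ a * x ^ 2 + b * x * y + c * y ^ 2) ↔ 0 ≤ a ∧ 0 ≤ c ∧ discrim a b c ≤ 0 := by
  constructor
  · intro h
    refine ⟨by simpa using h 1 0, by simpa using h 0 1, discrim_le_zero fun x => ?_⟩
    simpa [sq] using h x 1
  · rintro ⟨ha, hc, hd⟩ x y
    rcases ha.eq_or_lt with rfl | ha
    · obtain rfl : b = 0 := pow_eq_zero_iff two_ne_zero |>.1 <|
        le_antisymm (by simpa [discrim] using hd) (sq_nonneg b)
      simpa using mul_nonneg hc (sq_nonneg y)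
    · have hdy : discrim a (b * y) (c * y ^ 2) ≤ 0 := by
        rw [show discrim a (b * y) (c * y ^ 2) = y ^ 2 * discrim a b c by simp only [discrim]; ring]
        exact mul_nonpos_of_nonneg_of_nonpos (sq_nonneg y) hd
      have := (quadratic_nonneg_iff_discrim_nonpos ha).2 hdy x
      linarith

end Quadratic

theorem isGreatest_setOf_mul_eq_zero {d k M : ℝ} (hd : 0 ≤ d) (hk : 0 < k) (hM : 0 < M) :
    IsGreatest {y : ℝ | (d - k * y ^ 2) * (M * y ^ 2 + d) = 0} (√(d / k)) := by
  refine ⟨?_, fun y hy => ?_⟩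
  · rw [Set.mem_ofPred_eq, Real.sq_sqrt (by positivity), mul_div_cancel₀ d hk.ne', sub_self,
      zero_mul]
  · have hy2 : y ^ 2 ≤ d / k := by
      rw [le_div_iff₀ hk]
      rcases mul_eq_zero.1 hy with h | h <;> nlinarith [sq_nonneg y]
    exact (le_abs_self y).trans (Real.abs_le_sqrt hy2)

theorem exists_isGreatest_le_iff {β : Type*} [PartialOrder β] {s : Set β} {m b : β}
    (hm : IsGreatest s m) : (∃ a, IsGreatest s a ∧ a ≤ b) ↔ m ≤ b :=
  ⟨fun ⟨_, ha, hb⟩ => ha.unique hm ▸ hb, fun h => ⟨m, hm, h⟩⟩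

def LorenzSphereDecay (x₃₀ c α : ℝ) : Prop :=
  ∀ x₁ x₂ x₃ : ℝ,
    20 * x₁ * (x₂ - x₁) + 2 * x₂ * (28 * x₁ - x₂ - x₁ * x₃)
        + 2 * (x₃ - x₃₀) * (x₁ * x₂ - (8 / 3) * x₃)
      ≤ -α * (x₁ ^ 2 + x₂ ^ 2 + (x₃ - x₃₀) ^ 2 - c ^ 2)

noncomputable def lorenzRate (x₃₀ : ℝ) : ℝ := 11 - √((x₃₀ - 38) ^ 2 + 81)

section Lorenz

variable {x₃₀ c α : ℝ}

theorem lorenzSphereDecay_iff_forall_nonneg :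
    LorenzSphereDecay x₃₀ c α ↔
      (∀ x₁ x₂ : ℝ, 0 ≤ (20 - α) * x₁ ^ 2 + (2 * x₃₀ - 76) * x₁ * x₂ + (2 - α) * x₂ ^ 2) ∧
        ∀ u : ℝ, 0 ≤ (16 / 3 - α) * (u * u) + 16 / 3 * x₃₀ * u + α * c ^ 2 := by
  have gap : ∀ x₁ x₂ x₃ : ℝ,
      -α * (x₁ ^ 2 + x₂ ^ 2 + (x₃ - x₃₀) ^ 2 - c ^ 2)
          - (20 * x₁ * (x₂ - x₁) + 2 * x₂ * (28 * x₁ - x₂ - x₁ * x₃)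
            + 2 * (x₃ - x₃₀) * (x₁ * x₂ - (8 / 3) * x₃))
        = (20 - α) * x₁ ^ 2 + (2 * x₃₀ - 76) * x₁ * x₂ + (2 - α) * x₂ ^ 2
          + ((16 / 3 - α) * ((x₃ - x₃₀) * (x₃ - x₃₀)) + 16 / 3 * x₃₀ * (x₃ - x₃₀)
            + α * c ^ 2) := by
    intros; ring
  constructor
  · intro h
    -- scaling `(x₁, x₂)` by `t` scales the form by `t²`
    refine ⟨fun x₁ x₂ => nonneg_of_forall_mul_sq_add_nonneg (c := α * c ^ 2) fun t => ?_,
      fun u => ?_⟩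
    · linarith [h (t * x₁) (t * x₂) x₃₀, gap (t * x₁) (t * x₂) x₃₀]
    · linarith [h 0 0 (u + x₃₀), gap 0 0 (u + x₃₀)]
  · rintro ⟨hB, hR⟩ x₁ x₂ x₃
    linarith [hB x₁ x₂, hR (x₃ - x₃₀), gap x₁ x₂ x₃]

theorem lorenzRate_le_two (x₃₀ : ℝ) : lorenzRate x₃₀ ≤ 2 := by
  have : 9 ≤ √((x₃₀ - 38) ^ 2 + 81) :=
    Real.le_sqrt_of_sq_le (by nlinarith [sq_nonneg (x₃₀ - 38)])
  unfold lorenzRate; linarith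

theorem lorenzRate_sq_sub (x₃₀ : ℝ) :
    lorenzRate x₃₀ ^ 2 - 22 * lorenzRate x₃₀ = x₃₀ ^ 2 - 76 * x₃₀ + 1404 := by
  have := Real.sq_sqrt (by positivity : (0 : ℝ) ≤ (x₃₀ - 38) ^ 2 + 81)
  unfold lorenzRate; linear_combination this

theorem lorenzRate_pos_iff : 0 < lorenzRate x₃₀ ↔ x₃₀ ^ 2 - 76 * x₃₀ + 1404 < 0 := by
  rw [lorenzRate, sub_pos, Real.sqrt_lt' (by norm_num)]
  constructor <;> intro h <;> linarith

theorem le_lorenzRate_iff :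
    α ≤ lorenzRate x₃₀ ↔ α ≤ 2 ∧ x₃₀ ^ 2 - 76 * x₃₀ + 1404 ≤ α ^ 2 - 22 * α := by
  have hA := lorenzRate_le_two x₃₀
  rw [← lorenzRate_sq_sub]
  constructor
  · intro h
    exact ⟨h.trans hA, by nlinarith⟩
  · rintro ⟨h2, hP⟩
    nlinarith

theorem lorenz_horizontal_nonneg_iff :
    (∀ x₁ x₂ : ℝ, 0 ≤ (20 - α) * x₁ ^ 2 + (2 * x₃₀ - 76) * x₁ * x₂ + (2 - α) * x₂ ^ 2) ↔
      α ≤ lorenzRate x₃₀ := by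
  rw [binary_quadratic_nonneg_iff, le_lorenzRate_iff, discrim]
  constructor
  · rintro ⟨-, h2, hd⟩
    constructor <;> nlinarith
  · rintro ⟨h2, hP⟩
    exact ⟨by linarith, by linarith, by nlinarith⟩

theorem lorenz_vertical_nonneg_iff (hα : α ≤ 2) :
    (∀ u : ℝ, 0 ≤ (16 / 3 - α) * (u * u) + 16 / 3 * x₃₀ * u + α * c ^ 2) ↔
      64 * x₃₀ ^ 2 ≤ c ^ 2 * (α * (48 - 9 * α)) := by
  rw [quadratic_nonneg_iff_discrim_nonpos (by linarith), discrim]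
  constructor <;> intro h <;> linarith

theorem lorenzSphereDecay_iff :
    LorenzSphereDecay x₃₀ c α ↔
      α ≤ lorenzRate x₃₀ ∧ 64 * x₃₀ ^ 2 ≤ c ^ 2 * (α * (48 - 9 * α)) := by
  rw [lorenzSphereDecay_iff_forall_nonneg, lorenz_horizontal_nonneg_iff]
  exact and_congr_right fun h =>
    lorenz_vertical_nonneg_iff (h.trans (lorenzRate_le_two x₃₀))

theorem exists_pos_lorenzSphereDecay_iff :
    (∃ α, 0 < α ∧ LorenzSphereDecay x₃₀ c α) ↔
      0 < lorenzRate x₃₀ ∧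
        64 * x₃₀ ^ 2 ≤ c ^ 2 * (lorenzRate x₃₀ * (48 - 9 * lorenzRate x₃₀)) := by
  simp only [lorenzSphereDecay_iff]
  constructor
  · rintro ⟨α, hα, hαA, hc⟩
    refine ⟨hα.trans_le hαA, hc.trans (mul_le_mul_of_nonneg_left ?_ (sq_nonneg c))⟩
    nlinarith [lorenzRate_le_two x₃₀]
  · rintro ⟨hA, hc⟩
    exact ⟨_, hA, le_rfl, hc⟩

theorem lorenz_biquadratic_eq_mul {A : ℝ} (hA : A ^ 2 - 22 * A = x₃₀ ^ 2 - 76 * x₃₀ + 1404)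
    (y : ℝ) :
    9 * (x₃₀ ^ 2 - 76 * x₃₀ + 1404) * (9 * x₃₀ ^ 2 - 684 * x₃₀ + 13436) * y ^ 4
        + 384 * x₃₀ ^ 2 * (3 * x₃₀ ^ 2 - 228 * x₃₀ + 4762) * y ^ 2 + 4096 * x₃₀ ^ 4
      = (64 * x₃₀ ^ 2 - A * (48 - 9 * A) * y ^ 2)
          * ((9 * A ^ 2 - 348 * A + 3300) * y ^ 2 + 64 * x₃₀ ^ 2) := by
  linear_combination (-(81 * ((x₃₀ ^ 2 - 76 * x₃₀ + 1404) + (A ^ 2 - 22 * A)) + 7200) * y ^ 4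
      - 1152 * x₃₀ ^ 2 * y ^ 2) * hA

theorem isGreatest_lorenz_biquadratic_roots (hA : 0 < lorenzRate x₃₀) :
    IsGreatest
      {y : ℝ | 9 * (x₃₀ ^ 2 - 76 * x₃₀ + 1404) * (9 * x₃₀ ^ 2 - 684 * x₃₀ + 13436) * y ^ 4
        + 384 * x₃₀ ^ 2 * (3 * x₃₀ ^ 2 - 228 * x₃₀ + 4762) * y ^ 2 + 4096 * x₃₀ ^ 4 = 0}
      (√(64 * x₃₀ ^ 2 / (lorenzRate x₃₀ * (48 - 9 * lorenzRate x₃₀)))) := by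
  have h2 := lorenzRate_le_two x₃₀
  simp only [lorenz_biquadratic_eq_mul (lorenzRate_sq_sub x₃₀)]
  exact isGreatest_setOf_mul_eq_zero (by positivity) (by nlinarith) (by nlinarith)

end Lorenz

/-- Quantifier-free condition for spherical bounds with variable center `(0,0,x₃₀)`
for the classical Lorenz system (`s = 10`, `r = 28`, `b = 8/3`): the exponential
decrease condition on `V₂(x) = x₁² + x₂² + (x₃ − x₃₀)²` holds iff
`x₃₀² − 76x₃₀ + 1404 < 0` and `c ≥ c₄`, where `c₄` is the greatest real root of the
biquadratic `a₂ y⁴ + a₁ y² + a₀ = 0`. -/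
theorem lorenz_sphere_variable_center_qe
    (x₃₀ c : ℝ) (hc : 0 < c)
    (a₀ a₁ a₂ : ℝ)
    (ha₀ : a₀ = 4096 * x₃₀ ^ 4)
    (ha₁ : a₁ = 384 * x₃₀ ^ 2 * (3 * x₃₀ ^ 2 - 228 * x₃₀ + 4762))
    (ha₂ : a₂ = 9 * (x₃₀ ^ 2 - 76 * x₃₀ + 1404) * (9 * x₃₀ ^ 2 - 684 * x₃₀ + 13436)) :
    (∃ α : ℝ, 0 < α ∧ ∀ x₁ x₂ x₃ : ℝ,
        20 * x₁ * (x₂ - x₁) + 2 * x₂ * (28 * x₁ - x₂ - x₁ * x₃)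
          + 2 * (x₃ - x₃₀) * (x₁ * x₂ - (8 / 3) * x₃)
        ≤ -α * (x₁ ^ 2 + x₂ ^ 2 + (x₃ - x₃₀) ^ 2 - c ^ 2))
    ↔ (x₃₀ ^ 2 - 76 * x₃₀ + 1404 < 0 ∧
        ∃ c₄ : ℝ,
          (a₂ * c₄ ^ 4 + a₁ * c₄ ^ 2 + a₀ = 0 ∧
           ∀ y : ℝ, a₂ * y ^ 4 + a₁ * y ^ 2 + a₀ = 0 → y ≤ c₄) ∧
          c ≥ c₄) := by
  subst ha₀ ha₁ ha₂
  refine exists_pos_lorenzSphereDecay_iff.trans ?_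
  rw [← lorenzRate_pos_iff]
  refine and_congr_right fun hA => ?_
  have hg : 0 < lorenzRate x₃₀ * (48 - 9 * lorenzRate x₃₀) := by
    nlinarith [lorenzRate_le_two x₃₀]
  rw [← div_le_iff₀ hg, ← Real.sqrt_le_left hc.le]
  exact (exists_isGreatest_le_iff (isGreatest_lorenz_biquadratic_roots hA)).symm
end

section
/- Fix the Lorenz parameters s = 10, r = 28, b = 8/3. There exist x₃₀ ∈ ℝ, c > 0 with c < 152/√15, and α > 0 such that for all real x₁, x₂, x₃: V̇₂(x) ≤ −α·(V₂(x) − c²), where V₂(x) = x₁² + x₂² + (x₃ − x₃₀)². In other words, allowing a variable center (0, 0, x₃₀) of the bounding sphere yields a spherical attracting bound of radius strictly smaller than the classical radius 152/√15 ≈ 39.246 obtained with center (0, 0, 38). -/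
/-- Allowing a variable center `(0, 0, x₃₀)` of the bounding sphere for the classical
Lorenz system (`s = 10`, `r = 28`, `b = 8/3`) yields a spherical attracting bound of
radius strictly smaller than the classical radius `152/√15`. -/
theorem lorenz_sphere_variable_center_improves :
    ∃ x₃₀ c : ℝ, 0 < c ∧ c < 152 / Real.sqrt 15 ∧
      ∃ α : ℝ, 0 < α ∧ ∀ x₁ x₂ x₃ : ℝ,
        20 * x₁ * (x₂ - x₁) + 2 * x₂ * (28 * x₁ - x₂ - x₁ * x₃)
          + 2 * (x₃ - x₃₀) * (x₁ * x₂ - (8 / 3) * x₃)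
        ≤ -α * (x₁ ^ 2 + x₂ ^ 2 + (x₃ - x₃₀) ^ 2 - c ^ 2) := by
  refine ⟨35, 39, by norm_num, ?_, 3/2, by norm_num, ?_⟩
  · have h15 : (0:ℝ) < Real.sqrt 15 := Real.sqrt_pos.mpr (by norm_num)
    rw [lt_div_iff₀ h15]
    nlinarith [Real.sq_sqrt (by norm_num : (15:ℝ) ≥ 0), Real.sqrt_nonneg 15]
  · intro x₁ x₂ x₃
    nlinarith [sq_nonneg (x₂ - 6 * x₁), sq_nonneg x₁, sq_nonneg (23 * x₃ - 245),
      sq_nonneg (x₃ - 35)]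
end

section
/- Fix the Lorenz parameters s = 10, r = 28, b = 8/3, and let x₃₀ ∈ ℝ and c > 0. Define a₀ = 3211264·x₃₀⁴, a₁ = 10752·x₃₀²·(3x₃₀² − 336x₃₀ + 10612), a₂ = 9·(x₃₀² − 112x₃₀ + 3024)·(9x₃₀² − 1008x₃₀ + 29456). Then the condition '(there exists α > 0 such that for all real x₁, x₂, x₃: V̇₄(x) ≤ −α·(V₄(x) − c²))' holds if and only if x₃₀ > 0 and there exists c₅ which is the greatest real solution of a₂·y⁴ + a₁·y² + a₀ = 0 with c ≥ c₅. -/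
private lemma coef_nonpos (k M : ℝ) (hM : 0 ≤ M) (h : ∀ x : ℝ, k * x ^ 2 ≤ M) : k ≤ 0 := by
  by_contra hk
  push_neg at hk
  have hx := h (Real.sqrt ((M + 1) / k))
  rw [Real.sq_sqrt (by positivity)] at hx
  rw [mul_div_cancel₀ _ hk.ne'] at hx
  linarith

private lemma keyE (x₃₀ s g : ℝ) (hs2 : s ^ 2 = 81 + 5 * (x₃₀ - 56) ^ 2 / 14)
    (hg : g = 1500 * s - 12900 - 225 * (x₃₀ - 56) ^ 2 / 7) :
    9 * (x₃₀ ^ 2 - 112 * x₃₀ + 3024) * (9 * x₃₀ ^ 2 - 1008 * x₃₀ + 29456) * (6400 * x₃₀ ^ 2) ^ 2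
      + 10752 * x₃₀ ^ 2 * (3 * x₃₀ ^ 2 - 336 * x₃₀ + 10612) * (6400 * x₃₀ ^ 2) * g
      + 3211264 * x₃₀ ^ 4 * g ^ 2 = 0 := by
  subst hg
  linear_combination (2250000 * 3211264 * x₃₀ ^ 4) * hs2

private lemma keyroot (x₃₀ s g u : ℝ) (hg0 : g ≠ 0)
    (hs2 : s ^ 2 = 81 + 5 * (x₃₀ - 56) ^ 2 / 14)
    (hg : g = 1500 * s - 12900 - 225 * (x₃₀ - 56) ^ 2 / 7)
    (hu : u * g = 6400 * x₃₀ ^ 2) :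
    9 * (x₃₀ ^ 2 - 112 * x₃₀ + 3024) * (9 * x₃₀ ^ 2 - 1008 * x₃₀ + 29456) * u ^ 2
      + 10752 * x₃₀ ^ 2 * (3 * x₃₀ ^ 2 - 336 * x₃₀ + 10612) * u + 3211264 * x₃₀ ^ 4 = 0 := by
  have hE := keyE x₃₀ s g hs2 hg
  have h2 : (9 * (x₃₀ ^ 2 - 112 * x₃₀ + 3024) * (9 * x₃₀ ^ 2 - 1008 * x₃₀ + 29456) * u ^ 2
      + 10752 * x₃₀ ^ 2 * (3 * x₃₀ ^ 2 - 336 * x₃₀ + 10612) * u + 3211264 * x₃₀ ^ 4) * g ^ 2 = 0 := by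
    linear_combination hE + (9 * (x₃₀ ^ 2 - 112 * x₃₀ + 3024) * (9 * x₃₀ ^ 2 - 1008 * x₃₀ + 29456)
      * (u * g + 6400 * x₃₀ ^ 2) + 10752 * x₃₀ ^ 2 * (3 * x₃₀ ^ 2 - 336 * x₃₀ + 10612) * g) * hu
  rcases mul_eq_zero.mp h2 with h | h
  · exact h
  · exact absurd h (pow_ne_zero 2 hg0)

private lemma pointwise (x₃₀ c α x₁ x₂ x₃ : ℝ) (hα0 : 0 < α) (hα2 : α ≤ 2)
    (h1 : 400 * (56 - x₃₀) ^ 2 ≤ 1120 * (20 - α) * (2 - α))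
    (h2 : 6400 * x₃₀ ^ 2 ≤ (480 * α - 90 * α ^ 2) * c ^ 2) :
    560 * x₁ * (x₂ - x₁) + 20 * x₂ * (28 * x₁ - x₂ - x₁ * x₃)
      + 20 * (x₃ - x₃₀) * (x₁ * x₂ - (8 / 3) * x₃)
    ≤ -α * (28 * x₁ ^ 2 + 10 * x₂ ^ 2 + 10 * (x₃ - x₃₀) ^ 2 - c ^ 2) := by
  have h20 : (0:ℝ) < 20 - α := by linarith
  have hA : 28 * (α - 20) * x₁ ^ 2 + 10 * (α - 2) * x₂ ^ 2 + 20 * (56 - x₃₀) * x₁ * x₂ ≤ 0 := by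
    nlinarith [sq_nonneg (56 * (20 - α) * x₁ - 20 * (56 - x₃₀) * x₂),
      mul_nonneg (by linarith : (0:ℝ) ≤ 1120 * (20 - α) * (2 - α) - 400 * (56 - x₃₀) ^ 2)
        (sq_nonneg x₂), h20]
  have h3 : (0:ℝ) < 640 / 3 - 40 * α := by linarith
  have hB : (10 * α - 160 / 3) * (x₃ - x₃₀) ^ 2 - 160 / 3 * x₃₀ * (x₃ - x₃₀) ≤ α * c ^ 2 := by
    nlinarith [sq_nonneg ((20 * α - 320 / 3) * (x₃ - x₃₀) - 160 / 3 * x₃₀), h2, h3]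
  nlinarith [hA, hB]

private lemma fw_cond1 (x₃₀ α : ℝ) (h20 : 0 < 20 - α)
    (hk3 : 700 * (20 - α) * (56 - x₃₀) ^ 2 - 1960 * (2 - α) * (20 - α) ^ 2 ≤ 0) :
    400 * (56 - x₃₀) ^ 2 ≤ 1120 * (20 - α) * (2 - α) := by
  nlinarith [hk3, h20, sq_nonneg (56 - x₃₀)]

private lemma fw_cond2 (x₃₀ c α w : ℝ) (hα2 : α ≤ 2)
    (hw : w * (3 * α - 16) = 8 * x₃₀)
    (h5 : (10 * α - 160 / 3) * w ^ 2 - 160 / 3 * x₃₀ * w ≤ α * c ^ 2) :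
    6400 * x₃₀ ^ 2 ≤ (480 * α - 90 * α ^ 2) * c ^ 2 := by
  have hw2 : (w * (3 * α - 16)) ^ 2 = (8 * x₃₀) ^ 2 := by rw [hw]
  have hw3 : x₃₀ * (w * (3 * α - 16)) = x₃₀ * (8 * x₃₀) := by rw [hw]
  have key := mul_le_mul_of_nonneg_left h5 (by linarith : (0:ℝ) ≤ 3 * (16 - 3 * α))
  nlinarith [key, hw2, hw3]

private lemma fw_D (x₃₀ α : ℝ) (hα : 0 < α) (hα2 : α ≤ 2)
    (cond1 : 400 * (56 - x₃₀) ^ 2 ≤ 1120 * (20 - α) * (2 - α)) :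
    (x₃₀ - 56) ^ 2 < 112 := by
  nlinarith [cond1, mul_pos hα (by linarith : (0:ℝ) < 22 - α)]

private lemma D_pos (x₃₀ : ℝ) (hD : (x₃₀ - 56) ^ 2 < 112) : 0 < x₃₀ := by nlinarith

private lemma s_lb (x s : ℝ) (hs0 : 0 ≤ s) (hs2 : s ^ 2 = 81 + x) (hx : 0 ≤ x) : 9 ≤ s := by
  nlinarith

private lemma s_ub (x s : ℝ) (hs0 : 0 ≤ s) (hs2 : s ^ 2 = 81 + x) (hx : x < 40) : s < 11 := by
  nlinarith

private lemma fw_sqle (x₃₀ α : ℝ) (hα2 : α ≤ 2)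
    (cond1 : 400 * (56 - x₃₀) ^ 2 ≤ 1120 * (20 - α) * (2 - α)) :
    81 + 5 * (x₃₀ - 56) ^ 2 / 14 ≤ (11 - α) ^ 2 := by
  nlinarith [cond1]

private lemma g_mono (s α : ℝ) (hα2 : α ≤ 2) (hαs : α ≤ 11 - s) (hs9 : 9 ≤ s) :
    480 * α - 90 * α ^ 2 ≤ (11 - s) * (480 - 90 * (11 - s)) := by
  nlinarith [mul_nonneg (by linarith : (0:ℝ) ≤ (11 - s) - α)
    (by linarith : (0:ℝ) ≤ 480 - 90 * ((11 - s) + α))]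

private lemma a2_neg_of_D (x₃₀ : ℝ) (hD : (x₃₀ - 56) ^ 2 < 112) :
    9 * (x₃₀ ^ 2 - 112 * x₃₀ + 3024) * (9 * x₃₀ ^ 2 - 1008 * x₃₀ + 29456) < 0 := by
  have f1 : x₃₀ ^ 2 - 112 * x₃₀ + 3024 < 0 := by nlinarith
  have f2 : 0 < 9 * x₃₀ ^ 2 - 1008 * x₃₀ + 29456 := by nlinarith [sq_nonneg (x₃₀ - 56)]
  nlinarith [mul_neg_of_neg_of_pos f1 f2]

private lemma max_root_le (a₀ a₁ a₂ c₅ y : ℝ) (ha₀pos : 0 < a₀) (ha₂neg : a₂ < 0)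
    (hc₅nn : 0 ≤ c₅)
    (hroot : a₂ * c₅ ^ 4 + a₁ * c₅ ^ 2 + a₀ = 0)
    (hy : a₂ * y ^ 4 + a₁ * y ^ 2 + a₀ = 0) : y ≤ c₅ := by
  have hfac : (y ^ 2 - c₅ ^ 2) * (a₂ * (y ^ 2 + c₅ ^ 2) + a₁) = 0 := by
    linear_combination hy - hroot
  rcases mul_eq_zero.mp hfac with h1 | h1
  · nlinarith [h1, hc₅nn]
  · exfalso
    have hkey : a₀ = a₂ * (c₅ ^ 2 * y ^ 2) := by linear_combination hy - y ^ 2 * h1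
    nlinarith [hkey, ha₀pos, ha₂neg, mul_nonneg (sq_nonneg c₅) (sq_nonneg y)]

private lemma bw_a2_neg (a₀ a₁ a₂ c₅ : ℝ) (h0 : 0 < a₀) (h1 : 0 < a₁)
    (hroot : a₂ * c₅ ^ 4 + a₁ * c₅ ^ 2 + a₀ = 0) : a₂ < 0 := by
  by_contra hh
  push_neg at hh
  nlinarith [hroot, mul_nonneg hh (sq_nonneg (c₅ ^ 2)), mul_nonneg h1.le (sq_nonneg c₅)]

private lemma bw_D (x₃₀ : ℝ)
    (h9 : 9 * (x₃₀ ^ 2 - 112 * x₃₀ + 3024) * (9 * x₃₀ ^ 2 - 1008 * x₃₀ + 29456) < 0) :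
    (x₃₀ - 56) ^ 2 < 112 := by
  by_contra h'
  push_neg at h'
  have hQ : 0 < 9 * x₃₀ ^ 2 - 1008 * x₃₀ + 29456 := by nlinarith [sq_nonneg (x₃₀ - 56)]
  nlinarith [h9, h', hQ]

private lemma bw_c5sq (a₀ a₁ a₂ c₅ u : ℝ) (ha₀pos : 0 < a₀) (ha₂neg : a₂ < 0)
    (hc₅pos : 0 < c₅) (hu_pos : 0 < u)
    (hroot : a₂ * c₅ ^ 4 + a₁ * c₅ ^ 2 + a₀ = 0)
    (hqu : a₂ * u ^ 2 + a₁ * u + a₀ = 0) : c₅ ^ 2 = u := by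
  have hfac : (c₅ ^ 2 - u) * (a₂ * (c₅ ^ 2 + u) + a₁) = 0 := by
    linear_combination hroot - hqu
  rcases mul_eq_zero.mp hfac with h1 | h1
  · linarith
  · exfalso
    have hkey : a₀ = a₂ * (c₅ ^ 2 * u) := by linear_combination hqu - u * h1
    nlinarith [hkey, ha₀pos, ha₂neg, mul_pos (pow_pos hc₅pos 2) hu_pos]

set_option maxHeartbeats 1000000 in
/-- Quantifier-free condition for elliptical bounds with variable center `(0,0,x₃₀)`
for the classical Lorenz system (`s = 10`, `r = 28`, `b = 8/3`): the exponential
decrease condition on `V₄(x) = 28x₁² + 10x₂² + 10(x₃ − x₃₀)²` holds iff `x₃₀ > 0`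
and `c ≥ c₅`, where `c₅` is the greatest real root of the biquadratic
`a₂ y⁴ + a₁ y² + a₀ = 0`. -/
theorem lorenz_ellipse_variable_center_qe
    (x₃₀ c : ℝ) (hc : 0 < c)
    (a₀ a₁ a₂ : ℝ)
    (ha₀ : a₀ = 3211264 * x₃₀ ^ 4)
    (ha₁ : a₁ = 10752 * x₃₀ ^ 2 * (3 * x₃₀ ^ 2 - 336 * x₃₀ + 10612))
    (ha₂ : a₂ = 9 * (x₃₀ ^ 2 - 112 * x₃₀ + 3024) * (9 * x₃₀ ^ 2 - 1008 * x₃₀ + 29456)) :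
    (∃ α : ℝ, 0 < α ∧ ∀ x₁ x₂ x₃ : ℝ,
        560 * x₁ * (x₂ - x₁) + 20 * x₂ * (28 * x₁ - x₂ - x₁ * x₃)
          + 20 * (x₃ - x₃₀) * (x₁ * x₂ - (8 / 3) * x₃)
        ≤ -α * (28 * x₁ ^ 2 + 10 * x₂ ^ 2 + 10 * (x₃ - x₃₀) ^ 2 - c ^ 2))
    ↔ (x₃₀ > 0 ∧
        ∃ c₅ : ℝ,
          (a₂ * c₅ ^ 4 + a₁ * c₅ ^ 2 + a₀ = 0 ∧
           ∀ y : ℝ, a₂ * y ^ 4 + a₁ * y ^ 2 + a₀ = 0 → y ≤ c₅) ∧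
          c ≥ c₅) := by
  constructor
  · rintro ⟨α, hα, h⟩
    have hMc : 0 ≤ α * c ^ 2 := mul_nonneg hα.le (sq_nonneg c)
    have h2 : ∀ x₂ : ℝ, (10 * α - 20) * x₂ ^ 2 ≤ α * c ^ 2 := fun x₂ => by
      nlinarith [h 0 x₂ x₃₀]
    have hα2 : α ≤ 2 := by linarith [coef_nonpos _ _ hMc h2]
    have h20 : (0:ℝ) < 20 - α := by linarith
    have h3 : ∀ t : ℝ, (700 * (20 - α) * (56 - x₃₀) ^ 2 - 1960 * (2 - α) * (20 - α) ^ 2) * t ^ 2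
        ≤ α * c ^ 2 := fun t => by
      nlinarith [h (5 * (56 - x₃₀) * t) (14 * (20 - α) * t) x₃₀]
    have cond1 : 400 * (56 - x₃₀) ^ 2 ≤ 1120 * (20 - α) * (2 - α) :=
      fw_cond1 x₃₀ α h20 (coef_nonpos _ _ hMc h3)
    have hne : 3 * α - 16 ≠ 0 := by intro hh; linarith [hh.ge]
    have hw : 8 * x₃₀ / (3 * α - 16) * (3 * α - 16) = 8 * x₃₀ := div_mul_cancel₀ _ hne
    set w := 8 * x₃₀ / (3 * α - 16) with hw_def
    have h5 : (10 * α - 160 / 3) * w ^ 2 - 160 / 3 * x₃₀ * w ≤ α * c ^ 2 := by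
      nlinarith [h 0 0 (x₃₀ + w)]
    have cond2 : 6400 * x₃₀ ^ 2 ≤ (480 * α - 90 * α ^ 2) * c ^ 2 :=
      fw_cond2 x₃₀ c α w hα2 hw h5
    have hD : (x₃₀ - 56) ^ 2 < 112 := fw_D x₃₀ α hα hα2 cond1
    have hx₃₀ : 0 < x₃₀ := D_pos x₃₀ hD
    clear h h2 h3 h5 hw hne hMc
    refine ⟨hx₃₀, ?_⟩
    have hsnn : (0:ℝ) ≤ 81 + 5 * (x₃₀ - 56) ^ 2 / 14 := by positivity
    set s := Real.sqrt (81 + 5 * (x₃₀ - 56) ^ 2 / 14) with hs_def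
    have hs2 : s ^ 2 = 81 + 5 * (x₃₀ - 56) ^ 2 / 14 := Real.sq_sqrt hsnn
    have hs0 : 0 ≤ s := Real.sqrt_nonneg _
    have hs9 : 9 ≤ s := s_lb _ s hs0 hs2 (by positivity)
    have hs11 : s < 11 := s_ub _ s hs0 hs2 (by linarith)
    have hαs : α ≤ 11 - s := by
      have h1 : Real.sqrt (81 + 5 * (x₃₀ - 56) ^ 2 / 14) ≤ Real.sqrt ((11 - α) ^ 2) :=
        Real.sqrt_le_sqrt (fw_sqle x₃₀ α hα2 cond1)
      rw [Real.sqrt_sq (by linarith : (0:ℝ) ≤ 11 - α)] at h1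
      linarith [h1]
    set g := (11 - s) * (480 - 90 * (11 - s)) with hg_def
    have hgs : g = 1500 * s - 12900 - 225 * (x₃₀ - 56) ^ 2 / 7 := by
      rw [hg_def]; linear_combination (-90 : ℝ) * hs2
    have hg_pos : 0 < g := by
      rw [hg_def]; exact mul_pos (by linarith) (by linarith)
    have hgα : 480 * α - 90 * α ^ 2 ≤ g := g_mono s α hα2 hαs hs9
    have hc2 : 6400 * x₃₀ ^ 2 ≤ g * c ^ 2 :=
      le_trans cond2 (mul_le_mul_of_nonneg_right hgα (sq_nonneg c))
    set u := 6400 * x₃₀ ^ 2 / g with hu_def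
    have hu_pos : 0 < u := div_pos (by positivity) hg_pos
    have hug : u * g = 6400 * x₃₀ ^ 2 := div_mul_cancel₀ _ hg_pos.ne'
    have hqu : a₂ * u ^ 2 + a₁ * u + a₀ = 0 := by
      rw [ha₀, ha₁, ha₂]
      linear_combination keyroot x₃₀ s g u hg_pos.ne' hs2 hgs hug
    set c₅ := Real.sqrt u with hc₅_def
    have hc₅2 : c₅ ^ 2 = u := Real.sq_sqrt hu_pos.le
    have hc₅nn : 0 ≤ c₅ := Real.sqrt_nonneg _
    have hroot : a₂ * c₅ ^ 4 + a₁ * c₅ ^ 2 + a₀ = 0 := by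
      have h4 : c₅ ^ 4 = u ^ 2 := by rw [← hc₅2]; ring
      rw [h4, hc₅2]; exact hqu
    have ha₀pos : 0 < a₀ := by rw [ha₀]; positivity
    have ha₂neg : a₂ < 0 := ha₂ ▸ a2_neg_of_D x₃₀ hD
    refine ⟨c₅, ⟨hroot, fun y hy => max_root_le a₀ a₁ a₂ c₅ y ha₀pos ha₂neg hc₅nn hroot hy⟩, ?_⟩
    have hc2u : u ≤ c ^ 2 := by
      rw [hu_def, div_le_iff₀ hg_pos]; linarith [hc2]
    calc c₅ = Real.sqrt u := rfl
      _ ≤ Real.sqrt (c ^ 2) := Real.sqrt_le_sqrt hc2u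
      _ = c := Real.sqrt_sq hc.le
  · rintro ⟨hx₃₀, c₅, ⟨hroot, hmax⟩, hge⟩
    have ha₀pos : 0 < a₀ := by rw [ha₀]; positivity
    have ha₁pos : 0 < a₁ := by
      rw [ha₁]
      have f : 0 < 3 * x₃₀ ^ 2 - 336 * x₃₀ + 10612 := by nlinarith [sq_nonneg (x₃₀ - 56)]
      exact mul_pos (mul_pos (by norm_num) (pow_pos hx₃₀ 2)) f
    have ha₂neg : a₂ < 0 := bw_a2_neg a₀ a₁ a₂ c₅ ha₀pos ha₁pos hroot
    have hD : (x₃₀ - 56) ^ 2 < 112 := bw_D x₃₀ (ha₂ ▸ ha₂neg)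
    have hc₅nn : 0 ≤ c₅ := by
      have := hmax (-c₅) (by linear_combination hroot)
      linarith
    have hc₅pos : 0 < c₅ := by
      rcases hc₅nn.lt_or_eq with h | h
      · exact h
      · exfalso; rw [← h] at hroot; simp at hroot; linarith
    have hsnn : (0:ℝ) ≤ 81 + 5 * (x₃₀ - 56) ^ 2 / 14 := by positivity
    set s := Real.sqrt (81 + 5 * (x₃₀ - 56) ^ 2 / 14) with hs_def
    have hs2 : s ^ 2 = 81 + 5 * (x₃₀ - 56) ^ 2 / 14 := Real.sq_sqrt hsnn
    have hs0 : 0 ≤ s := Real.sqrt_nonneg _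
    have hs9 : 9 ≤ s := s_lb _ s hs0 hs2 (by positivity)
    have hs11 : s < 11 := s_ub _ s hs0 hs2 (by linarith)
    set g := (11 - s) * (480 - 90 * (11 - s)) with hg_def
    have hgs : g = 1500 * s - 12900 - 225 * (x₃₀ - 56) ^ 2 / 7 := by
      rw [hg_def]; linear_combination (-90 : ℝ) * hs2
    have hg_pos : 0 < g := by
      rw [hg_def]; exact mul_pos (by linarith) (by linarith)
    set u := 6400 * x₃₀ ^ 2 / g with hu_def
    have hu_pos : 0 < u := div_pos (by positivity) hg_pos
    have hug : u * g = 6400 * x₃₀ ^ 2 := div_mul_cancel₀ _ hg_pos.ne'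
    have hqu : a₂ * u ^ 2 + a₁ * u + a₀ = 0 := by
      rw [ha₀, ha₁, ha₂]
      linear_combination keyroot x₃₀ s g u hg_pos.ne' hs2 hgs hug
    have hc₅u : c₅ ^ 2 = u := bw_c5sq a₀ a₁ a₂ c₅ u ha₀pos ha₂neg hc₅pos hu_pos hroot hqu
    have hcc : u ≤ c ^ 2 := by
      rw [← hc₅u]; exact pow_le_pow_left₀ hc₅nn hge 2
    have hcond2 : 6400 * x₃₀ ^ 2 ≤ (480 * (11 - s) - 90 * (11 - s) ^ 2) * c ^ 2 := by
      have h1 : g * u ≤ g * c ^ 2 := mul_le_mul_of_nonneg_left hcc hg_pos.le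
      have h2 : g * c ^ 2 = (480 * (11 - s) - 90 * (11 - s) ^ 2) * c ^ 2 := by
        rw [hg_def]; ring
      linarith [h1, h2 ▸ h1, hug, mul_comm g u ▸ hug]
    refine ⟨11 - s, by linarith, fun x₁ x₂ x₃ => ?_⟩
    exact pointwise x₃₀ c (11 - s) x₁ x₂ x₃ (by linarith) (by linarith)
      (le_of_eq (by linear_combination (-1120 : ℝ) * hs2)) hcond2
end

section
/- Define, for x₃₀ ∈ ℝ, the coefficients a₀ = 3211264·x₃₀⁴, a₁ = 10752·x₃₀²·(3x₃₀² − 336x₃₀ + 10612), a₂ = 9·(x₃₀² − 112x₃₀ + 3024)·(9x₃₀² − 1008x₃₀ + 29456). If x₃₀ > 0 and the biquadratic equation a₂·c⁴ + a₁·c² + a₀ = 0 has a real solution c, then 56 − 4√7 < x₃₀ < 56 + 4√7. In particular the classical center value x₃₀ = 56 = 2r lies at the midpoint of this interval. -/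
/-- If `x₃₀ > 0` and the biquadratic `a₂ c⁴ + a₁ c² + a₀ = 0` (with the coefficients
arising from the elliptical bound of the classical Lorenz system) has a real solution,
then `56 − 4√7 < x₃₀ < 56 + 4√7`; in particular the classical center value
`x₃₀ = 56 = 2r` is the midpoint of this interval. -/
theorem lorenz_ellipse_center_interval
    (x₃₀ : ℝ)
    (a₀ a₁ a₂ : ℝ)
    (ha₀ : a₀ = 3211264 * x₃₀ ^ 4)
    (ha₁ : a₁ = 10752 * x₃₀ ^ 2 * (3 * x₃₀ ^ 2 - 336 * x₃₀ + 10612))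
    (ha₂ : a₂ = 9 * (x₃₀ ^ 2 - 112 * x₃₀ + 3024) * (9 * x₃₀ ^ 2 - 1008 * x₃₀ + 29456))
    (hx : 0 < x₃₀)
    (hroot : ∃ c : ℝ, a₂ * c ^ 4 + a₁ * c ^ 2 + a₀ = 0) :
    (56 - 4 * Real.sqrt 7 < x₃₀ ∧ x₃₀ < 56 + 4 * Real.sqrt 7) ∧
    ((56 - 4 * Real.sqrt 7) + (56 + 4 * Real.sqrt 7)) / 2 = 56 := by
  obtain ⟨c, hc⟩ := hroot
  have hq : x₃₀ ^ 2 - 112 * x₃₀ + 3024 < 0 := by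
    by_contra hq
    push_neg at hq
    have h2 : (0:ℝ) < 9 * x₃₀ ^ 2 - 1008 * x₃₀ + 29456 := by nlinarith [sq_nonneg (x₃₀ - 56)]
    have h1 : (0:ℝ) < 3 * x₃₀ ^ 2 - 336 * x₃₀ + 10612 := by nlinarith [sq_nonneg (x₃₀ - 56)]
    have ha₂' : 0 ≤ a₂ := by rw [ha₂]; positivity
    have ha₁' : 0 < a₁ := by rw [ha₁]; positivity
    have ha₀' : 0 < a₀ := by rw [ha₀]; positivity
    nlinarith [sq_nonneg c, sq_nonneg (c^2), mul_nonneg ha₂' (sq_nonneg (c^2)),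
      mul_nonneg ha₁'.le (sq_nonneg c)]
  have hs : Real.sqrt 7 ^ 2 = 7 := Real.sq_sqrt (by norm_num)
  have hsn : 0 ≤ Real.sqrt 7 := Real.sqrt_nonneg 7
  refine ⟨⟨?_, ?_⟩, by ring⟩
  · nlinarith [sq_nonneg (x₃₀ - 56 + 4 * Real.sqrt 7)]
  · nlinarith [sq_nonneg (x₃₀ - 56 - 4 * Real.sqrt 7)]
end

section
/- Fix the Lorenz parameters s = 10, r = 28, b = 8/3. There exist x₃₀ > 0, c > 0 with c < (8/3)·28·√(10/(8/3 − 1)) (the Sparrow bound ≈ 182.895 for fixed center x₃₀ = 56), and α > 0 such that for all real x₁, x₂, x₃: V̇₄(x) ≤ −α·(V₄(x) − c²), where V₄(x) = 28x₁² + 10x₂² + 10(x₃ − x₃₀)². In other words, allowing a variable center improves Sparrow's elliptical bound. -/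
/-- Allowing a variable center `(0, 0, x₃₀)` of the bounding ellipsoid
`V₄(x) = 28x₁² + 10x₂² + 10(x₃ − x₃₀)² ≤ c²` for the classical Lorenz system improves
Sparrow's elliptical bound `c = (8/3)·28·√(10/(8/3 − 1))`. -/
theorem lorenz_ellipse_variable_center_improves :
    ∃ x₃₀ c : ℝ, 0 < x₃₀ ∧ 0 < c ∧
      c < (8 / 3) * 28 * Real.sqrt (10 / (8 / 3 - 1)) ∧
      ∃ α : ℝ, 0 < α ∧ ∀ x₁ x₂ x₃ : ℝ,
        560 * x₁ * (x₂ - x₁) + 20 * x₂ * (28 * x₁ - x₂ - x₁ * x₃)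
          + 20 * (x₃ - x₃₀) * (x₁ * x₂ - (8 / 3) * x₃)
        ≤ -α * (28 * x₁ ^ 2 + 10 * x₂ ^ 2 + 10 * (x₃ - x₃₀) ^ 2 - c ^ 2) := by
  refine ⟨53, 180, by norm_num, by norm_num, ?_, 9/5, by norm_num, ?_⟩
  · have h6 : (10 : ℝ) / (8 / 3 - 1) = 6 := by norm_num
    rw [h6]
    have h : (135 / 56 : ℝ) < Real.sqrt 6 := by
      rw [show (135 / 56 : ℝ) = Real.sqrt ((135 / 56) ^ 2) by
        rw [Real.sqrt_sq (by norm_num)]]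
      exact Real.sqrt_lt_sqrt (by positivity) (by norm_num)
    nlinarith [h]
  · intro x₁ x₂ x₃
    nlinarith [sq_nonneg (x₂ - 15 * x₁), sq_nonneg x₁, sq_nonneg (x₃ - 13)]
end

section
/- Fix the Lorenz parameters s = 10, r = 28, b = 8/3, and let p₁, p₂, p₃ > 0 with p₂ ≠ p₃ and x₃₀ ∈ ℝ. Then for every c > 0 there exist real x₁, x₂, x₃ such that V₅(x) = p₁x₁² + p₂x₂² + p₃(x₃ − x₃₀)² > c² and V̇₅(x) ≥ 0. Consequently, no ellipsoid of the form {V₅ ≤ c²} with p₂ ≠ p₃ can satisfy the Lyapunov decrease condition (V₅(x) > c² implies V̇₅(x) < 0): the mixed term 2(p₃ − p₂)x₁x₂x₃ in V̇₅ cannot be dominated, which forces p₂ = p₃ for admissible ellipsoidal bounds. -/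
/-- Helper: a cubic with positive leading coefficient is eventually nonnegative,
at a point where `p₁ t² > c²` as well. -/
lemma cubic_helper (a B C p₁ c : ℝ) (ha : 0 < a) (hp₁ : 0 < p₁) (hc : 0 < c) :
    ∃ t : ℝ, p₁ * t ^ 2 > c ^ 2 ∧ a * t ^ 3 + B * t ^ 2 + C * t ≥ 0 := by
  have hs : 0 < Real.sqrt p₁ := Real.sqrt_pos.mpr hp₁
  have hsq : Real.sqrt p₁ ^ 2 = p₁ := Real.sq_sqrt hp₁.le
  set t : ℝ := 1 + (|B| + |C|) / a + c / Real.sqrt p₁ with ht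
  have hBC : 0 ≤ (|B| + |C|) / a := by positivity
  have hcs : 0 < c / Real.sqrt p₁ := by positivity
  have ht1 : 1 ≤ t := by simp only [ht]; linarith
  have ht0 : 0 < t := by linarith
  have htc : c / Real.sqrt p₁ < t := by simp only [ht]; linarith
  have hat : |B| + |C| ≤ a * t := by
    have : (|B| + |C|) / a ≤ t := by simp only [ht]; linarith
    calc |B| + |C| = a * ((|B| + |C|) / a) := by field_simp
    _ ≤ a * t := by nlinarith
  refine ⟨t, ?_, ?_⟩
  · have h1 : c = Real.sqrt p₁ * (c / Real.sqrt p₁) := by field_simp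
    have hct : c < Real.sqrt p₁ * t := by
      calc c = Real.sqrt p₁ * (c / Real.sqrt p₁) := h1
      _ < Real.sqrt p₁ * t := by exact (mul_lt_mul_iff_right₀ hs).mpr htc
    nlinarith [mul_self_lt_mul_self hc.le hct, hsq]
  · have hB : -|B| ≤ B := neg_abs_le B
    have hC : -|C| ≤ C := neg_abs_le C
    have hB0 : 0 ≤ |B| := abs_nonneg B
    have hC0 : 0 ≤ |C| := abs_nonneg C
    nlinarith [sq_nonneg t, mul_pos ht0 ht0, mul_le_mul_of_nonneg_left hat (mul_pos ht0 ht0).le,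
      mul_le_mul_of_nonneg_right hB (sq_nonneg t), mul_le_mul_of_nonneg_right hC ht0.le,
      mul_le_mul_of_nonneg_left ht1 (mul_nonneg hC0 ht0.le)]

/-- For the classical Lorenz system (`s = 10`, `r = 28`, `b = 8/3`), if `p₂ ≠ p₃`
then no ellipsoid `{V₅ ≤ c²}` with `V₅(x) = p₁x₁² + p₂x₂² + p₃(x₃ − x₃₀)²` satisfies
the Lyapunov decrease condition: for every `c > 0` there is a point outside the
ellipsoid where `V̇₅ ≥ 0`. -/
theorem lorenz_general_ellipse_needs_p2_eq_p3
    (p₁ p₂ p₃ : ℝ) (hp₁ : 0 < p₁) (hp₂ : 0 < p₂) (hp₃ : 0 < p₃)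
    (hne : p₂ ≠ p₃) (x₃₀ : ℝ) :
    ∀ c : ℝ, 0 < c →
      ∃ x₁ x₂ x₃ : ℝ,
        p₁ * x₁ ^ 2 + p₂ * x₂ ^ 2 + p₃ * (x₃ - x₃₀) ^ 2 > c ^ 2 ∧
        2 * p₁ * x₁ * (10 * (x₂ - x₁)) + 2 * p₂ * x₂ * (28 * x₁ - x₂ - x₁ * x₃)
          + 2 * p₃ * (x₃ - x₃₀) * (x₁ * x₂ - (8 / 3) * x₃) ≥ 0 := by
  intro c hc
  set B : ℝ := 54 * p₂ - (16 / 3 + 2 * x₃₀) * p₃ with hB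
  set C : ℝ := (16 / 3) * p₃ * x₃₀ with hC
  rcases lt_or_gt_of_ne hne with h | h
  · obtain ⟨t, h1, h2⟩ := cubic_helper (2 * (p₃ - p₂)) B C p₁ c (by linarith) hp₁ hc
    refine ⟨t, t, t, ?_, ?_⟩
    · nlinarith [mul_nonneg hp₂.le (sq_nonneg t), mul_nonneg hp₃.le (sq_nonneg (t - x₃₀))]
    · have : 2 * (p₃ - p₂) * t ^ 3 + B * t ^ 2 + C * t =
        2 * p₁ * t * (10 * (t - t)) + 2 * p₂ * t * (28 * t - t - t * t)
          + 2 * p₃ * (t - x₃₀) * (t * t - (8 / 3) * t) := by simp only [hB, hC]; ring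
      linarith [this ▸ h2]
  · obtain ⟨t, h1, h2⟩ := cubic_helper (2 * (p₂ - p₃)) B (-C) p₁ c (by linarith) hp₁ hc
    refine ⟨-t, -t, -t, ?_, ?_⟩
    · nlinarith [mul_nonneg hp₂.le (sq_nonneg t), mul_nonneg hp₃.le (sq_nonneg (-t - x₃₀))]
    · have : 2 * (p₂ - p₃) * t ^ 3 + B * t ^ 2 + (-C) * t =
        2 * p₁ * (-t) * (10 * ((-t) - (-t))) + 2 * p₂ * (-t) * (28 * (-t) - (-t) - (-t) * (-t))
          + 2 * p₃ * ((-t) - x₃₀) * ((-t) * (-t) - (8 / 3) * (-t)) := by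
        simp only [hB, hC]; ring
      linarith [this ▸ h2]
end
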